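/- arXiv:2205.08665 — 2 statements merged into one kernel-verified Lean document; each statement's English description precedes it below -/
import Mathlib

section
/- Let w be an edge configuration on a finite simple graph G. Then the sum of the unnormalized joint vertex–edge weights over all spin configurations equals the unnormalized edge weight: Σ_{s : V→{−1,+1}} W_VE(s,w) = W_E(w). -/
open Classical

noncomputable section

variable {V : Type*} [Fintype V] [DecidableEq V]

/-- Product `s i * s j` of spins over an unordered edge `{i, j}`. -/
def pairProd (s : V → ℝ) : Sym2 V → ℝ :=
  Sym2.lift ⟨fun i j => s i * s j, fun _ _ => mul_comm _ _⟩

/-- Unnormalized Gibbs weight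
`W_V(s) = exp (β Σ_{{i,j} ∈ E} s_i s_j + β Σ_i h_i s_i)`. -/
def WV (G : SimpleGraph V) [DecidableRel G.Adj] (β : ℝ) (h : V → ℝ) (s : V → ℝ) : ℝ :=
  Real.exp (β * ∑ e ∈ G.edgeFinset, pairProd s e + β * ∑ i : V, h i * s i)

/-- Edge factor of the joint vertex-edge weight:
`(1 - e^{-2β})` if `w_{ij} = 1` and `s_i = s_j`, `e^{-2β}` if `w_{ij} = 0`, else `0`. -/
def edgeFactorVE (β : ℝ) (s : V → ℝ) (b : Bool) : Sym2 V → ℝ :=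
  Sym2.lift ⟨fun i j =>
    if b then (if s i = s j then 1 - Real.exp (-2 * β) else 0) else Real.exp (-2 * β),
    by intro i j; by_cases hb : b <;> simp [hb, eq_comm]⟩

/-- Unnormalized joint vertex-edge weight `W_VE(s, w)`. -/
def WVE (G : SimpleGraph V) [DecidableRel G.Adj] (β : ℝ) (h : V → ℝ) (s : V → ℝ)
    (w : G.edgeSet → Bool) : ℝ :=
  (∏ e : G.edgeSet, edgeFactorVE β s (w e) e.val) * Real.exp (β * ∑ i : V, h i * s i)

/-- Edge factor of the Swendsen-Wang edge-step probability: if `s_i = s_j` then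
`(1 - e^{-2β})` for `w_{ij} = 1` and `e^{-2β}` for `w_{ij} = 0`; otherwise `0` for
`w_{ij} = 1` and `1` for `w_{ij} = 0`. -/
def edgeFactorP (β : ℝ) (s : V → ℝ) (b : Bool) : Sym2 V → ℝ :=
  Sym2.lift ⟨fun i j =>
    if s i = s j then (if b then 1 - Real.exp (-2 * β) else Real.exp (-2 * β))
    else (if b then 0 else 1),
    by intro i j; simp [eq_comm]⟩

/-- Swendsen-Wang edge-step probability `P(s, w)`. -/
def swP (G : SimpleGraph V) [DecidableRel G.Adj] (β : ℝ) (s : V → ℝ)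
    (w : G.edgeSet → Bool) : ℝ :=
  ∏ e : G.edgeSet, edgeFactorP β s (w e) e.val

/-- Spanning subgraph of `G` whose edges are the edges `e` with `w e = 1`. -/
def openSubgraph (G : SimpleGraph V) [DecidableRel G.Adj] (w : G.edgeSet → Bool) :
    SimpleGraph V where
  Adj i j := ∃ hij : G.Adj i j, w ⟨s(i, j), G.mem_edgeSet.mpr hij⟩ = true
  symm := ⟨by
    rintro i j ⟨hij, hw⟩
    refine ⟨hij.symm, ?_⟩
    have he : (⟨s(j, i), G.mem_edgeSet.mpr hij.symm⟩ : G.edgeSet)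
        = ⟨s(i, j), G.mem_edgeSet.mpr hij⟩ := Subtype.ext (Sym2.eq_swap)
    rw [he]; exact hw⟩
  loopless := ⟨by rintro i ⟨hij, -⟩; exact hij.ne rfl⟩

/-- `h_γ = Σ_{i ∈ γ} h_i`: sum of the field over a connected component `γ ∈ C_w`. -/
def hComp (G : SimpleGraph V) [DecidableRel G.Adj] (h : V → ℝ) (w : G.edgeSet → Bool)
    (γ : (openSubgraph G w).ConnectedComponent) : ℝ :=
  ∑ i ∈ Finset.univ.filter (fun i => (openSubgraph G w).connectedComponentMk i = γ), h i

/-- A configuration is compatible with the edge configuration `w` if it is constant on each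
connected component of the subgraph of open edges. -/
def Compatible (G : SimpleGraph V) [DecidableRel G.Adj] (w : G.edgeSet → Bool)
    (t : V → ℝ) : Prop :=
  ∀ i j : V, (openSubgraph G w).connectedComponentMk i = (openSubgraph G w).connectedComponentMk j
    → t i = t j

/-- Swendsen-Wang spin-step probability `Q(w, t)`: for `t` compatible with `w`, the product
over components `γ ∈ C_w` of `e^{β h_γ τ_γ} / (e^{β h_γ} + e^{-β h_γ})`, where
`τ_γ = t γ.out` is the common value of `t` on `γ`; and `0` for incompatible `t`. -/
def swQ (G : SimpleGraph V) [DecidableRel G.Adj] (β : ℝ) (h : V → ℝ) (w : G.edgeSet → Bool)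
    (t : V → ℝ) : ℝ :=
  if Compatible G w t then
    ∏ γ : (openSubgraph G w).ConnectedComponent,
      Real.exp (β * hComp G h w γ * t γ.out) /
        (Real.exp (β * hComp G h w γ) + Real.exp (-(β * hComp G h w γ)))
  else 0

/-- Unnormalized edge weight
`W_E(w) = Π_{w_e = 1} (1 - e^{-2β}) · Π_{w_e = 0} e^{-2β} · Π_{γ ∈ C_w} (e^{β h_γ} + e^{-β h_γ})`. -/
def WE (G : SimpleGraph V) [DecidableRel G.Adj] (β : ℝ) (h : V → ℝ)
    (w : G.edgeSet → Bool) : ℝ :=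
  (∏ _e ∈ Finset.univ.filter (fun e : G.edgeSet => w e = true), (1 - Real.exp (-2 * β))) *
  (∏ _e ∈ Finset.univ.filter (fun e : G.edgeSet => w e = false), Real.exp (-2 * β)) *
  ∏ γ : (openSubgraph G w).ConnectedComponent,
    (Real.exp (β * hComp G h w γ) + Real.exp (-(β * hComp G h w γ)))

/-!
An open edge joining unequal spins contributes the factor `0`, so `W_VE(s, w)` vanishes unless `s`
is constant on every cluster `γ ∈ C_w`, i.e. `s = σ ∘ γ(·)` for a cluster spin `σ`. For such `s`
the edge factors give the bond weight of `w` alone, and the field term factorizes over the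
clusters as `Π_γ e^{β h_γ σ_γ}`. Summing the cluster spins `σ_γ ∈ {-1, 1}` independently gives
`Π_γ (e^{β h_γ} + e^{-β h_γ})`.
-/

namespace SimpleGraph

variable {α : Type*} {H : SimpleGraph V}

omit [Fintype V] [DecidableEq V] in
theorem Reachable.eq_of_forall_adj {f : V → α} (hf : ∀ i j, H.Adj i j → f i = f j) {i j : V}
    (hij : H.Reachable i j) : f i = f j := by
  obtain ⟨p⟩ := hij
  induction p with
  | nil => rfl
  | cons hadj _ ih => exact (hf _ _ hadj).trans ih

theorem sum_pi_eq_sum_comp_connectedComponentMk [Fintype α] [Fintype H.ConnectedComponent]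
    {M : Type*} [AddCommMonoid M] (f : (V → α) → M)
    (hf : ∀ s i j, H.Adj i j → s i ≠ s j → f s = 0) :
    ∑ s, f s = ∑ σ : H.ConnectedComponent → α, f (σ ∘ H.connectedComponentMk) := by
  refine (Fintype.sum_of_injective (· ∘ H.connectedComponentMk)
    Quot.mk_surjective.injective_comp_right _ _ (fun s hs => ?_) fun _ => rfl).symm
  by_contra hfs
  refine hs ⟨Quot.lift s fun i j hij => hij.eq_of_forall_adj fun a b hab => ?_, rfl⟩
  by_contra hne
  exact hfs (hf s a b hab hne)

end SimpleGraph

omit [DecidableEq V] in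
theorem WVE_eq_zero_of_adj_of_ne (G : SimpleGraph V) [DecidableRel G.Adj] (β : ℝ) (h : V → ℝ)
    (s : V → ℝ) (w : G.edgeSet → Bool) {i j : V} (hij : (openSubgraph G w).Adj i j)
    (hs : s i ≠ s j) : WVE G β h s w = 0 := by
  obtain ⟨hadj, hw⟩ := hij
  refine mul_eq_zero_of_left (Finset.prod_eq_zero (Finset.mem_univ ⟨s(i, j), hadj⟩) ?_) _
  simp [edgeFactorVE, hw, hs]

def bondWeight (G : SimpleGraph V) [DecidableRel G.Adj] (β : ℝ) (w : G.edgeSet → Bool) : ℝ :=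
  (∏ _e ∈ Finset.univ.filter (fun e : G.edgeSet => w e = true), (1 - Real.exp (-2 * β))) *
  (∏ _e ∈ Finset.univ.filter (fun e : G.edgeSet => w e = false), Real.exp (-2 * β))

omit [DecidableEq V] in
theorem prod_edgeFactorVE_of_forall_adj (G : SimpleGraph V) [DecidableRel G.Adj] (β : ℝ)
    (s : V → ℝ) (w : G.edgeSet → Bool) (hs : ∀ i j, (openSubgraph G w).Adj i j → s i = s j) :
    ∏ e : G.edgeSet, edgeFactorVE β s (w e) e.val = bondWeight G β w := by
  have hfactor : ∀ e : G.edgeSet, edgeFactorVE β s (w e) e.val =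
      if w e = true then 1 - Real.exp (-2 * β) else Real.exp (-2 * β) := by
    rintro ⟨e, he⟩
    induction e using Sym2.ind with
    | _ i j =>
      cases hw : w ⟨s(i, j), he⟩
      · simp [edgeFactorVE]
      · simp [edgeFactorVE, hs i j ⟨he, hw⟩]
  rw [Fintype.prod_congr _ _ hfactor, Finset.prod_ite, bondWeight]
  simp only [Bool.not_eq_true]

theorem sum_mul_comp_connectedComponentMk (G : SimpleGraph V) [DecidableRel G.Adj]
    (h : V → ℝ) (w : G.edgeSet → Bool) (σ : (openSubgraph G w).ConnectedComponent → ℝ) :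
    ∑ i, h i * σ ((openSubgraph G w).connectedComponentMk i) =
      ∑ γ, hComp G h w γ * σ γ := by
  rw [← Finset.sum_fiberwise Finset.univ (openSubgraph G w).connectedComponentMk]
  refine Fintype.sum_congr _ _ fun γ => ?_
  rw [hComp, Finset.sum_mul]
  exact Finset.sum_congr rfl fun i hi => by rw [(Finset.mem_filter.mp hi).2]

theorem WVE_comp_connectedComponentMk (G : SimpleGraph V) [DecidableRel G.Adj] (β : ℝ)
    (h : V → ℝ) (w : G.edgeSet → Bool) (σ : (openSubgraph G w).ConnectedComponent → ℝ) :
    WVE G β h (σ ∘ (openSubgraph G w).connectedComponentMk) w =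
      bondWeight G β w * ∏ γ, Real.exp (β * hComp G h w γ * σ γ) := by
  have hconst : ∀ i j, (openSubgraph G w).Adj i j →
      (σ ∘ (openSubgraph G w).connectedComponentMk) i =
        (σ ∘ (openSubgraph G w).connectedComponentMk) j := fun _ _ hij =>
    congrArg σ (SimpleGraph.ConnectedComponent.connectedComponentMk_eq_of_adj hij)
  rw [WVE, prod_edgeFactorVE_of_forall_adj G β _ w hconst]
  simp only [Function.comp_apply, sum_mul_comp_connectedComponentMk, Finset.mul_sum,
    Real.exp_sum, mul_assoc]

theorem sum_exp_mul_neg_one_one (c : ℝ) :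
    ∑ x : ({-1, 1} : Finset ℝ), Real.exp (c * x) = Real.exp c + Real.exp (-c) := by
  rw [Finset.sum_coe_sort {-1, 1} fun x => Real.exp (c * x),
    Finset.sum_pair (by norm_num : (-1 : ℝ) ≠ 1), add_comm]
  simp

theorem sum_WVE_over_spinConfigs_general (G : SimpleGraph V) [DecidableRel G.Adj]
    (β : ℝ) (h : V → ℝ) (w : G.edgeSet → Bool) :
    ∑ s : V → ({-1, 1} : Finset ℝ), WVE G β h (fun i => (s i : ℝ)) w = WE G β h w := by
  calc ∑ s : V → ({-1, 1} : Finset ℝ), WVE G β h (fun i => (s i : ℝ)) w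
      = ∑ σ : (openSubgraph G w).ConnectedComponent → ({-1, 1} : Finset ℝ),
          WVE G β h ((fun γ => (σ γ : ℝ)) ∘ (openSubgraph G w).connectedComponentMk) w :=
        SimpleGraph.sum_pi_eq_sum_comp_connectedComponentMk _ fun _ _ _ hij hne =>
          WVE_eq_zero_of_adj_of_ne G β h _ w hij (Subtype.coe_injective.ne hne)
    _ = bondWeight G β w * ∑ σ : (openSubgraph G w).ConnectedComponent → ({-1, 1} : Finset ℝ),
          ∏ γ, Real.exp (β * hComp G h w γ * σ γ) := by
        simp only [WVE_comp_connectedComponentMk, Finset.mul_sum]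
    _ = bondWeight G β w * ∏ γ : (openSubgraph G w).ConnectedComponent,
          ∑ x : ({-1, 1} : Finset ℝ), Real.exp (β * hComp G h w γ * x) := by
        rw [Fintype.prod_sum]
    _ = WE G β h w := by
        simp only [sum_exp_mul_neg_one_one]
        rfl

/-- For any edge configuration `w`, summing the unnormalized joint vertex-edge
weights over all spin configurations gives the unnormalized edge weight:
`Σ_{s : V → {-1,+1}} W_VE(s, w) = W_E(w)`. -/
theorem sum_WVE_over_spinConfigs (G : SimpleGraph V) [DecidableRel G.Adj]
    (β : ℝ) (hβ : 0 < β) (h : V → ℝ) (w : G.edgeSet → Bool) :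
    ∑ s : V → ({-1, 1} : Finset ℝ), WVE G β h (fun i => (s i : ℝ)) w = WE G β h w :=
  sum_WVE_over_spinConfigs_general G β h w

end
end

section
/- For every edge configuration w and every spin configuration s on a finite simple graph G, the unnormalized joint vertex–edge weight factors as W_VE(s,w) = W_E(w) · Q(w,s). (Both sides vanish when s is not compatible with w.) -/
open Classical

noncomputable section

variable {V : Type*} [Fintype V] [DecidableEq V]

/-! The weight `W_VE(s, w)` vanishes unless every open edge joins equal spins, i.e. unless `s` is
constant on the clusters of `w`. For such `s` the edge factors of `W_VE` no longer depend on `s`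
and give the first two products of `W_E(w)`, while the field term splits over the clusters as
`exp (β Σ_i h_i s_i) = Π_γ e^{β h_γ σ_γ}`; the partition functions `e^{β h_γ} + e^{-β h_γ}` of
the clusters then cancel against the denominators of `Q(w, s)`. -/

open Finset

theorem SimpleGraph.Reachable.eq_of_forall_adj_s4 {U α : Type*} {H : SimpleGraph U} {f : U → α}
    (hf : ∀ ⦃i j⦄, H.Adj i j → f i = f j) {i j : U} (hij : H.Reachable i j) : f i = f j := by
  obtain ⟨p⟩ := hij
  induction p with
  | nil => rfl
  | cons hadj _ ih => exact (hf hadj).trans ih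

section

variable {G : SimpleGraph V} [DecidableRel G.Adj] {w : G.edgeSet → Bool} {s : V → ℝ}

omit [Fintype V] [DecidableEq V] in
theorem compatible_iff_forall_adj :
    Compatible G w s ↔ ∀ ⦃i j⦄, (openSubgraph G w).Adj i j → s i = s j :=
  ⟨fun hc _ _ hij => hc _ _ (SimpleGraph.ConnectedComponent.sound hij.reachable),
    fun hf _ _ hij => (SimpleGraph.ConnectedComponent.exact hij).eq_of_forall_adj_s4 hf⟩

omit [Fintype V] [DecidableEq V] in
theorem edgeFactorVE_of_compatible (β : ℝ) (hc : Compatible G w s) (e : G.edgeSet) :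
    edgeFactorVE β s (w e) e = if w e then 1 - Real.exp (-2 * β) else Real.exp (-2 * β) := by
  obtain ⟨e, he⟩ := e
  induction e using Sym2.ind with
  | _ i j =>
    cases hw : w ⟨s(i, j), he⟩
    · simp [edgeFactorVE]
    · simp [edgeFactorVE, compatible_iff_forall_adj.mp hc ⟨he, hw⟩]

omit [DecidableEq V] in
theorem prod_edgeFactorVE_of_compatible (β : ℝ) (hc : Compatible G w s) :
    ∏ e : G.edgeSet, edgeFactorVE β s (w e) e =
      (∏ _e ∈ univ.filter (fun e : G.edgeSet => w e = true), (1 - Real.exp (-2 * β))) *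
        ∏ _e ∈ univ.filter (fun e : G.edgeSet => w e = false), Real.exp (-2 * β) := by
  simp only [edgeFactorVE_of_compatible β hc, prod_ite, Bool.not_eq_true]

omit [DecidableEq V] in
theorem prod_edgeFactorVE_eq_zero_of_not_compatible (β : ℝ) (hc : ¬ Compatible G w s) :
    ∏ e : G.edgeSet, edgeFactorVE β s (w e) e = 0 := by
  simp only [compatible_iff_forall_adj, not_forall] at hc
  obtain ⟨i, j, ⟨hij, hw⟩, hne⟩ := hc
  refine prod_eq_zero (mem_univ ⟨s(i, j), hij⟩) ?_
  simp [edgeFactorVE, hw, hne]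

theorem sum_mul_eq_sum_hComp_mul_of_compatible (h : V → ℝ) (hc : Compatible G w s) :
    ∑ i, h i * s i = ∑ γ, hComp G h w γ * s γ.out := by
  rw [← sum_fiberwise univ (openSubgraph G w).connectedComponentMk]
  refine sum_congr rfl fun γ _ => ?_
  rw [hComp, sum_mul]
  refine sum_congr rfl fun i hi => ?_
  rw [hc i γ.out ((mem_filter.mp hi).2.trans (Quot.out_eq γ).symm)]

theorem prod_partition_mul_swQ_of_compatible (β : ℝ) (h : V → ℝ) (hc : Compatible G w s) :
    (∏ γ, (Real.exp (β * hComp G h w γ) + Real.exp (-(β * hComp G h w γ)))) * swQ G β h w s =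
      Real.exp (β * ∑ i, h i * s i) := by
  rw [swQ, if_pos hc, ← prod_mul_distrib, sum_mul_eq_sum_hComp_mul_of_compatible h hc, mul_sum,
    Real.exp_sum]
  refine prod_congr rfl fun γ _ => ?_
  rw [mul_div_cancel₀ _ (by positivity), mul_assoc]

end

theorem WVE_eq_WE_mul_swQ_general (G : SimpleGraph V) [DecidableRel G.Adj]
    (β : ℝ) (h : V → ℝ)
    (w : G.edgeSet → Bool) (s : V → ℝ) :
    WVE G β h s w = WE G β h w * swQ G β h w s := by
  by_cases hc : Compatible G w s
  · rw [WVE, WE, prod_edgeFactorVE_of_compatible β hc,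
      ← prod_partition_mul_swQ_of_compatible β h hc]
    ring
  · rw [WVE, swQ, if_neg hc, prod_edgeFactorVE_eq_zero_of_not_compatible β hc, zero_mul, mul_zero]

/-- For every edge configuration `w` and spin configuration `s`, the joint
vertex-edge weight factors as `W_VE(s, w) = W_E(w) · Q(w, s)`. -/
theorem WVE_eq_WE_mul_swQ (G : SimpleGraph V) [DecidableRel G.Adj]
    (β : ℝ) (hβ : 0 < β) (h : V → ℝ)
    (w : G.edgeSet → Bool) (s : V → ℝ) (hs : ∀ i, s i = 1 ∨ s i = -1) :
    WVE G β h s w = WE G β h w * swQ G β h w s :=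
  WVE_eq_WE_mul_swQ_general G β h w s

end
end
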